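/- arXiv:1801.05320 — 4 statements merged into one kernel-verified Lean document; each statement's English description precedes it below -/
import Mathlib

section
/- If a group Q is a retract of a finitely presented group G — that is, there exist group homomorphisms ι : Q → G and r : G → Q with r ∘ ι = id_Q — then Q is finitely presented. -/
/-- A group is finitely presented if it is isomorphic to the quotient of a
finitely generated free group by the normal closure of a finite set. -/
def IsFinitelyPresented (G : Type*) [Group G] : Prop :=
  ∃ (m : ℕ) (S : Finset (FreeGroup (Fin m))),
    Nonempty ((FreeGroup (Fin m) ⧸ Subgroup.normalClosure (S : Set (FreeGroup (Fin m)))) ≃* G)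

/-- If a group `Q` is a retract of a finitely presented group `G` — that is, there exist
group homomorphisms `ι : Q → G` and `r : G → Q` with `r ∘ ι = id_Q` — then `Q` is
finitely presented. -/
theorem retract_of_finitelyPresented {G Q : Type*} [Group G] [Group Q]
    (hG : IsFinitelyPresented G) (ι : Q →* G) (r : G →* Q)
    (h : r.comp ι = MonoidHom.id Q) : IsFinitelyPresented Q := by
  obtain ⟨m, S, ⟨e⟩⟩ := hG
  have hri : ∀ q, r (ι q) = q := fun q => DFunLike.congr_fun h q
  set N := Subgroup.normalClosure (S : Set (FreeGroup (Fin m))) with hN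
  let π : FreeGroup (Fin m) →* G := e.toMonoidHom.comp (QuotientGroup.mk' N)
  have hπ : Function.Surjective π := e.surjective.comp (QuotientGroup.mk'_surjective N)
  have hkerπ : ∀ w, π w = 1 ↔ w ∈ N := by
    intro w
    constructor
    · intro hw
      have h1 : (QuotientGroup.mk' N) w = 1 := e.injective (by rw [map_one]; exact hw)
      rwa [← QuotientGroup.eq_one_iff w]
    · intro hw
      have h1 : (QuotientGroup.mk' N) w = 1 := (QuotientGroup.eq_one_iff w).mpr hw
      show e ((QuotientGroup.mk' N) w) = 1
      rw [h1, map_one]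
  have hv : ∀ i : Fin m, ∃ w, π w = ι (r (π (FreeGroup.of i))) :=
    fun i => hπ _
  choose v hv using hv
  classical
  set T : Finset (FreeGroup (Fin m)) :=
    S ∪ Finset.image (fun i => (FreeGroup.of i)⁻¹ * v i) Finset.univ with hT
  set K := Subgroup.normalClosure (T : Set (FreeGroup (Fin m))) with hK
  have hNK : N ≤ K := Subgroup.normalClosure_mono (by
    intro x hx
    simp only [hT, Finset.coe_union, Set.mem_union]
    exact Or.inl hx)
  let f : FreeGroup (Fin m) →* Q := r.comp π
  have hKf : K ≤ f.ker := by
    apply Subgroup.normalClosure_le_normal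
    intro x hx
    simp only [hT, Finset.coe_union, Set.mem_union, Finset.coe_image, Set.mem_image] at hx
    rcases hx with hx | ⟨i, _, rfl⟩
    · have : x ∈ N := Subgroup.subset_normalClosure hx
      simp only [SetLike.mem_coe, MonoidHom.mem_ker]
      show r (π x) = 1
      rw [(hkerπ x).mpr this, map_one]
    · simp only [SetLike.mem_coe, MonoidHom.mem_ker]
      show r (π ((FreeGroup.of i)⁻¹ * v i)) = 1
      rw [map_mul, map_mul, map_inv, map_inv, hv i, hri]
      group
  let φ : FreeGroup (Fin m) →* FreeGroup (Fin m) := FreeGroup.lift v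
  have hφπ : ∀ w, π (φ w) = ι (r (π w)) := by
    have : π.comp φ = ι.comp (r.comp π) := by
      apply FreeGroup.ext_hom
      intro i
      simp [φ, FreeGroup.lift_apply_of, hv i]
    exact fun w => DFunLike.congr_fun this w
  have hmkφ : ∀ w, (QuotientGroup.mk w : FreeGroup (Fin m) ⧸ K) = QuotientGroup.mk (φ w) := by
    have : (QuotientGroup.mk' K) = (QuotientGroup.mk' K).comp φ := by
      apply FreeGroup.ext_hom
      intro i
      have hmem : (FreeGroup.of i)⁻¹ * v i ∈ K := Subgroup.subset_normalClosure (by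
        simp only [hT, Finset.coe_union, Set.mem_union, Finset.coe_image, Set.mem_image]
        exact Or.inr ⟨i, Finset.mem_univ i, rfl⟩)
      have := (QuotientGroup.eq_one_iff ((FreeGroup.of i)⁻¹ * v i)).mpr hmem
      rw [QuotientGroup.mk_mul, QuotientGroup.mk_inv] at this
      have h2 : (QuotientGroup.mk (FreeGroup.of i) : FreeGroup (Fin m) ⧸ K) = QuotientGroup.mk (v i) := by
        have h3 := mul_eq_one_iff_eq_inv.mp this
        rw [inv_eq_iff_eq_inv.mp h3, inv_inv]
      simpa [φ, FreeGroup.lift_apply_of] using h2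
    exact fun w => DFunLike.congr_fun this w
  have hfK : f.ker ≤ K := by
    intro w hw
    have hw1 : r (π w) = 1 := hw
    have : π (φ w) = 1 := by rw [hφπ w, hw1, map_one]
    have hφwN : φ w ∈ N := (hkerπ _).mp this
    have : (QuotientGroup.mk w : FreeGroup (Fin m) ⧸ K) = 1 := by
      rw [hmkφ w]
      exact (QuotientGroup.eq_one_iff _).mpr (hNK hφwN)
    exact (QuotientGroup.eq_one_iff _).mp this
  refine ⟨m, T, ⟨MulEquiv.ofBijective (QuotientGroup.lift K f hKf) ⟨?_, ?_⟩⟩⟩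
  · rw [injective_iff_map_eq_one]
    intro x hx
    induction x using QuotientGroup.induction_on with
    | H w =>
      have : f w = 1 := hx
      exact (QuotientGroup.eq_one_iff _).mpr (hfK this)
  · intro q
    obtain ⟨g, hg⟩ := hπ (ι q)
    exact ⟨QuotientGroup.mk g, by simp [f, hg, hri]⟩
end

section
/- Let ∅ ≠ I ⊆ {1,…,n−1}, set Ext(I) = I ∪ nonAdj(I), and let K_I(R) be the subgroup of SL_n(R) generated by all e_{ij}(r) with i < j not Ext(I)-connected and r ∈ R. Then K_I(R) is a normal subgroup of P_I(R), K_I(R) ∩ LE_I(R) = {1}, and K_I(R)·LE_I(R) = P_I(R); in particular, the natural projection realizes the extended Levi factor LE_I(R) as a retract of P_I(R) with kernel K_I(R). -/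
/-- The elementary matrix `1 + r·E i j` as an element of `SL_n(R)`. -/
def elemMat {n : ℕ} {R : Type*} [CommRing R] (i j : Fin n) (hij : i ≠ j) (r : R) :
    Matrix.SpecialLinearGroup (Fin n) R :=
  ⟨Matrix.transvection i j r, Matrix.det_transvection_of_ne i j hij r⟩

/-- The set of diagonal matrices in `SL_n(R)`. -/
def diagMats (n : ℕ) (R : Type*) [CommRing R] :
    Set (Matrix.SpecialLinearGroup (Fin n) R) :=
  {g | (g : Matrix (Fin n) (Fin n) R).IsDiag}

/-- For (0-based) indices `i < j` in `Fin n`, the (1-based) pair `(i+1, j+1)` is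
`I`-connected if every simple-root index `k` with `i+1 ≤ k ≤ j` lies in `I`. -/
def IConn {n : ℕ} (I : Set ℕ) (i j : Fin n) : Prop :=
  ∀ k : ℕ, i.val + 1 ≤ k → k ≤ j.val → k ∈ I

/-- Upper elementary matrices `e_{ij}(r)` with `i < j` a `J`-connected pair. -/
def upperElems (n : ℕ) (R : Type*) [CommRing R] (J : Set ℕ) :
    Set (Matrix.SpecialLinearGroup (Fin n) R) :=
  {g | ∃ (i j : Fin n) (h : i < j) (r : R), IConn J i j ∧ g = elemMat i j (ne_of_lt h) r}

/-- All upper elementary matrices `e_{ij}(r)`, `i < j`. -/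
def allUpperElems (n : ℕ) (R : Type*) [CommRing R] :
    Set (Matrix.SpecialLinearGroup (Fin n) R) :=
  {g | ∃ (i j : Fin n) (h : i < j) (r : R), g = elemMat i j (ne_of_lt h) r}

/-- Lower elementary matrices `e_{ji}(r)` with `i < j` an `I`-connected pair. -/
def lowerElems (n : ℕ) (R : Type*) [CommRing R] (I : Set ℕ) :
    Set (Matrix.SpecialLinearGroup (Fin n) R) :=
  {g | ∃ (i j : Fin n) (h : i < j) (r : R), IConn I i j ∧ g = elemMat j i (ne_of_gt h) r}

/-- The standard parabolic subgroup `P_I(R) ≤ SL_n(R)`. -/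
def parabolic (n : ℕ) (R : Type*) [CommRing R] (I : Set ℕ) :
    Subgroup (Matrix.SpecialLinearGroup (Fin n) R) :=
  Subgroup.closure (diagMats n R ∪ allUpperElems n R ∪ lowerElems n R I)

/-- The Levi factor `L_I(R) ≤ SL_n(R)`. -/
def levi (n : ℕ) (R : Type*) [CommRing R] (I : Set ℕ) :
    Subgroup (Matrix.SpecialLinearGroup (Fin n) R) :=
  Subgroup.closure (diagMats n R ∪ upperElems n R I ∪ lowerElems n R I)

/-- `Adj(I)`: simple-root indices not in `I` adjacent to an element of `I`. -/
def adjSet (n : ℕ) (I : Set ℕ) : Set ℕ :=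
  {k | k ∈ Set.Icc 1 (n - 1) ∧ k ∉ I ∧ (k - 1 ∈ I ∨ k + 1 ∈ I)}

/-- `nonAdj(I)`: simple-root indices neither in `I` nor adjacent to `I`. -/
def nonAdjSet (n : ℕ) (I : Set ℕ) : Set ℕ :=
  Set.Icc 1 (n - 1) \ (I ∪ adjSet n I)

/-- The extended Levi factor `LE_I(R)` (for `I ≠ ∅`): generated by the Levi factor
together with all `e_{ij}(r)`, `i < j` a `nonAdj(I)`-connected pair. -/
def extLevi (n : ℕ) (R : Type*) [CommRing R] (I : Set ℕ) :
    Subgroup (Matrix.SpecialLinearGroup (Fin n) R) :=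
  Subgroup.closure (diagMats n R ∪ upperElems n R I ∪ lowerElems n R I ∪
    upperElems n R (nonAdjSet n I))

open scoped Pointwise

/-- The subgroup K_I(R) generated by all `e_{ij}(r)` with `i < j` not
`Ext(I) = I ∪ nonAdj(I)`-connected. -/
def kerK (n : ℕ) (R : Type*) [CommRing R] (I : Set ℕ) :
    Subgroup (Matrix.SpecialLinearGroup (Fin n) R) :=
  Subgroup.closure
    {g | ∃ (i j : Fin n) (h : i < j) (r : R),
      ¬ IConn (I ∪ nonAdjSet n I) i j ∧ g = elemMat i j (ne_of_lt h) r}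

/-!
Number the `Ext(I)`-blocks of `{1, …, n}` from left to right, so that `i < j` is
`Ext(I)`-connected exactly when `i` and `j` have the same block index. Then `K_I` is generated
by the `e_{ij}(r)` with block index of `i` below that of `j`, so it is block unitriangular, while
`LE_I` is generated by diagonal matrices and elementary matrices inside the blocks, so it is
block diagonal; hence `K_I ∩ LE_I = 1`. Every generator of `P_I` is diagonal or an `e_{ab}(s)`
with block index of `a` at most that of `b`, and the commutator relations of transvections show
that conjugating by such a matrix keeps `K_I` stable. Finally an element of `I` is never
adjacent to one of `nonAdj(I)`, so an `Ext(I)`-connected pair is `I`-connected or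
`nonAdj(I)`-connected, and every generator of `P_I` lies in `K_I` or in `LE_I`.
-/

open Matrix Subgroup

section GroupTheory

variable {G : Type*} [Group G]

theorem Subgroup.closure_subset_of_forall_inv_mem {S : Set G} {M : Submonoid G} (hS : S ⊆ M)
    (hinv : ∀ s ∈ S, s⁻¹ ∈ S) : (closure S : Set G) ⊆ M := fun x hx => by
  induction hx using closure_induction'' with
  | mem s hs => exact hS hs
  | inv_mem s hs => exact hS (hinv s hs)
  | one => exact M.one_mem
  | mul x y _ _ hx hy => exact M.mul_mem hx hy

theorem Subgroup.closure_le_normalizer_closure_of_forall_inv_mem {S T : Set G}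
    (hinv : ∀ t ∈ T, t⁻¹ ∈ T) (hT : ∀ t ∈ T, ∀ s ∈ S, t * s * t⁻¹ ∈ closure S) :
    closure T ≤ normalizer (closure S) := by
  let M : Submonoid G :=
    { carrier := {g | ∀ x ∈ closure S, g * x * g⁻¹ ∈ closure S}
      one_mem' := by simp
      mul_mem' := fun {g h} hg hh x hx => by simpa [mul_assoc] using hg _ (hh x hx) }
  have hTM : T ⊆ M := fun t ht x hx => by
    induction hx using closure_induction with
    | mem s hs => exact hT t ht s hs
    | one => simp
    | mul x y _ _ hx hy => simpa [mul_assoc] using mul_mem hx hy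
    | inv x _ hx => simpa [mul_assoc] using inv_mem hx
  exact le_normalizer_closure_iff.2 fun g hg s hs =>
    closure_subset_of_forall_inv_mem hTM hinv hg s (subset_closure hs)

end GroupTheory

section Transvection

variable {ι R : Type*} [Fintype ι] [DecidableEq ι] [CommRing R] {a b i j : ι} (s r : R)

theorem Matrix.commute_transvection (hbi : b ≠ i) (haj : a ≠ j) :
    Commute (transvection a b s) (transvection i j r) := by
  simp [Commute, SemiconjBy, transvection, add_mul, mul_add, hbi, haj.symm]
  abel

theorem Matrix.transvection_mul_transvection_chain (haj : a ≠ j) :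
    transvection a i s * transvection i j r =
      transvection i j r * transvection a j (s * r) * transvection a i s := by
  simp [transvection, add_mul, mul_add, haj.symm]
  abel

theorem Matrix.transvection_mul_transvection_chain' (hij : i ≠ j) (hbi : b ≠ i) (hbj : b ≠ j) :
    transvection j b s * transvection i j r =
      transvection i j r * transvection i b (-(r * s)) * transvection j b s := by
  have hneg : single i b (-(r * s)) = -single i b (r * s) := by
    rw [eq_neg_iff_add_eq_zero, ← single_add, neg_add_cancel, single_zero]
  simp [transvection, add_mul, mul_add, hbi, hbj, hij.symm, hneg]
  abel

theorem Matrix.diagonal_mul_transvection_mul_diagonal {v w : ι → R}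
    (hvw : diagonal v * diagonal w = 1) :
    diagonal v * transvection i j r * diagonal w = transvection i j (v i * r * w j) := by
  have : diagonal v * single i j r * diagonal w = single i j (v i * r * w j) := by
    ext a b; by_cases ha : i = a <;> by_cases hb : j = b <;> simp [single, ha, hb]
  simp [transvection, mul_add, add_mul, hvw, this]

end Transvection

section ElementaryMatrices

variable {n : ℕ} {R : Type*} [CommRing R]

theorem coe_elemMat {i j : Fin n} (h : i ≠ j) (r : R) :
    (elemMat i j h r : Matrix (Fin n) (Fin n) R) = transvection i j r := rfl

theorem elemMat_inv {i j : Fin n} (h : i ≠ j) (r : R) :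
    (elemMat i j h r)⁻¹ = elemMat i j h (-r) := by
  refine inv_eq_of_mul_eq_one_right (Subtype.ext ?_)
  simp [coe_elemMat, transvection_mul_transvection_same i j h]

theorem inv_mem_diagMats {d : SpecialLinearGroup (Fin n) R} (hd : d ∈ diagMats n R) :
    d⁻¹ ∈ diagMats n R := by
  change (↑(d⁻¹) : Matrix (Fin n) (Fin n) R).IsDiag
  rw [Matrix.SpecialLinearGroup.coe_inv, ← IsDiag.diagonal_diag hd, adjugate_diagonal]
  exact isDiag_diagonal _

theorem diagMats_conj_elemMat {d : SpecialLinearGroup (Fin n) R} (hd : d ∈ diagMats n R)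
    {i j : Fin n} (h : i ≠ j) (r : R) :
    d * elemMat i j h r * d⁻¹ =
      elemMat i j h ((d : Matrix (Fin n) (Fin n) R) i i * r *
        (↑(d⁻¹) : Matrix (Fin n) (Fin n) R) j j) := by
  have hd' : (↑(d⁻¹) : Matrix (Fin n) (Fin n) R).IsDiag := inv_mem_diagMats hd
  have hdd' : diagonal (diag (d : Matrix (Fin n) (Fin n) R)) *
      diagonal (diag (↑(d⁻¹) : Matrix (Fin n) (Fin n) R)) = 1 := by
    rw [IsDiag.diagonal_diag hd, IsDiag.diagonal_diag hd', ← Matrix.SpecialLinearGroup.coe_mul,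
      mul_inv_cancel, Matrix.SpecialLinearGroup.coe_one]
  refine Subtype.ext ?_
  simp only [Matrix.SpecialLinearGroup.coe_mul, coe_elemMat]
  conv_lhs => rw [← IsDiag.diagonal_diag hd, ← IsDiag.diagonal_diag hd']
  exact diagonal_mul_transvection_mul_diagonal r hdd'

theorem elemMat_conj_of_ne {a b i j : Fin n} (hab : a ≠ b) (hij : i ≠ j) (hbi : b ≠ i)
    (haj : a ≠ j) (s r : R) :
    elemMat a b hab s * elemMat i j hij r * (elemMat a b hab s)⁻¹ = elemMat i j hij r := by
  rw [mul_inv_eq_iff_eq_mul]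
  exact Subtype.ext (commute_transvection s r hbi haj)

theorem elemMat_conj_chain {a i j : Fin n} (hai : a ≠ i) (hij : i ≠ j) (haj : a ≠ j) (s r : R) :
    elemMat a i hai s * elemMat i j hij r * (elemMat a i hai s)⁻¹ =
      elemMat i j hij r * elemMat a j haj (s * r) := by
  rw [mul_inv_eq_iff_eq_mul]
  exact Subtype.ext (transvection_mul_transvection_chain s r haj)

theorem elemMat_conj_chain' {i j b : Fin n} (hij : i ≠ j) (hjb : j ≠ b) (hib : i ≠ b) (s r : R) :
    elemMat j b hjb s * elemMat i j hij r * (elemMat j b hjb s)⁻¹ =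
      elemMat i j hij r * elemMat i b hib (-(r * s)) := by
  rw [mul_inv_eq_iff_eq_mul]
  exact Subtype.ext (transvection_mul_transvection_chain' s r hij hib.symm hjb.symm)

variable (R) in
def elemMats (p : Fin n → Fin n → Prop) : Set (SpecialLinearGroup (Fin n) R) :=
  {g | ∃ (i j : Fin n) (h : i ≠ j) (r : R), p i j ∧ g = elemMat i j h r}

theorem elemMat_mem_elemMats {p : Fin n → Fin n → Prop} {i j : Fin n} (h : i ≠ j) (hp : p i j)
    (r : R) : elemMat i j h r ∈ elemMats R p :=
  ⟨i, j, h, r, hp, rfl⟩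

theorem inv_mem_elemMats {p : Fin n → Fin n → Prop} {g : SpecialLinearGroup (Fin n) R}
    (hg : g ∈ elemMats R p) : g⁻¹ ∈ elemMats R p := by
  obtain ⟨i, j, h, r, hp, rfl⟩ := hg
  exact elemMat_inv h r ▸ elemMat_mem_elemMats h hp (-r)

end ElementaryMatrices

section BlockStructure

variable {n : ℕ} {R : Type*} [CommRing R] {α : Type*} (f : Fin n → α)

variable (R) in
def blockLevi : Subgroup (SpecialLinearGroup (Fin n) R) :=
  closure (diagMats n R ∪ elemMats R fun i j => f i = f j)

variable (R) in
def blockDiagonalMonoid : Submonoid (SpecialLinearGroup (Fin n) R) where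
  carrier := {g | ∀ u v, f u ≠ f v → (g : Matrix (Fin n) (Fin n) R) u v = 0}
  one_mem' u v huv := one_apply_ne fun h => huv (congrArg f h)
  mul_mem' {a b} ha hb u v huv := by
    simp only [Matrix.SpecialLinearGroup.coe_mul, mul_apply]
    refine Finset.sum_eq_zero fun k _ => ?_
    by_cases hk : f u = f k
    · rw [hb k v (hk ▸ huv), mul_zero]
    · rw [ha u k hk, zero_mul]

theorem blockLevi_subset_blockDiagonalMonoid :
    (blockLevi R f : Set (SpecialLinearGroup (Fin n) R)) ⊆ blockDiagonalMonoid R f := by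
  refine closure_subset_of_forall_inv_mem ?_ ?_
  · rintro g (hg | ⟨i, j, h, r, hij, rfl⟩) u v huv
    · exact hg fun h => huv (congrArg f h)
    · rw [coe_elemMat, transvection, Matrix.add_apply, one_apply_ne fun h => huv (congrArg f h),
        zero_add, single_apply_of_ne]
      rintro ⟨rfl, rfl⟩
      exact huv hij
  · rintro g (hg | hg)
    exacts [Or.inl (inv_mem_diagMats hg), Or.inr (inv_mem_elemMats hg)]

variable [Preorder α]

variable (R) in
def blockUnipotent : Subgroup (SpecialLinearGroup (Fin n) R) :=
  closure (elemMats R fun i j => f i < f j)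

variable (R) in
def blockParabolic : Subgroup (SpecialLinearGroup (Fin n) R) :=
  closure (diagMats n R ∪ elemMats R fun i j => f i ≤ f j)

variable (R) in
def blockUnitriangularMonoid : Submonoid (SpecialLinearGroup (Fin n) R) where
  carrier := {g | ∀ u v, ¬ f u < f v → ((g : Matrix (Fin n) (Fin n) R) - 1) u v = 0}
  one_mem' := by simp
  mul_mem' {a b} ha hb u v huv := by
    have key : (a * b : Matrix (Fin n) (Fin n) R) - 1 =
        (a - 1) * (b - 1) + (a - 1) + (b - 1) := by noncomm_ring
    simp only [Matrix.SpecialLinearGroup.coe_mul, key, Matrix.add_apply,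
      ha u v huv, hb u v huv, add_zero, mul_apply]
    refine Finset.sum_eq_zero fun k _ => ?_
    by_cases hk : f u < f k
    · rw [hb k v fun hkv => huv (hk.trans hkv), mul_zero]
    · rw [ha u k hk, zero_mul]

theorem blockUnipotent_subset_blockUnitriangularMonoid :
    (blockUnipotent R f : Set (SpecialLinearGroup (Fin n) R)) ⊆ blockUnitriangularMonoid R f := by
  refine closure_subset_of_forall_inv_mem ?_ fun _ => inv_mem_elemMats
  rintro _ ⟨i, j, h, r, hij, rfl⟩ u v huv
  rw [coe_elemMat, transvection, add_sub_cancel_left, single_apply_of_ne]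
  rintro ⟨rfl, rfl⟩
  exact huv hij

theorem eq_one_of_mem_blockUnitriangularMonoid_of_mem_blockDiagonalMonoid
    {g : SpecialLinearGroup (Fin n) R} (hu : g ∈ blockUnitriangularMonoid R f)
    (hd : g ∈ blockDiagonalMonoid R f) : g = 1 := by
  ext u v
  by_cases huv : f u = f v
  · exact sub_eq_zero.1 (hu u v huv.not_lt)
  · rw [hd u v huv, Matrix.SpecialLinearGroup.coe_one, one_apply_ne fun h => huv (congrArg f h)]

theorem blockUnipotent_inf_blockLevi : blockUnipotent R f ⊓ blockLevi R f = ⊥ :=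
  (eq_bot_iff_forall _).2 fun _ hg =>
    eq_one_of_mem_blockUnitriangularMonoid_of_mem_blockDiagonalMonoid f
      (blockUnipotent_subset_blockUnitriangularMonoid f hg.1)
      (blockLevi_subset_blockDiagonalMonoid f hg.2)

theorem elemMat_conj_mem_blockUnipotent {a b : Fin n} (hab : a ≠ b) (hf : f a ≤ f b) (s : R)
    {g : SpecialLinearGroup (Fin n) R} (hg : g ∈ elemMats R fun i j => f i < f j) :
    elemMat a b hab s * g * (elemMat a b hab s)⁻¹ ∈ blockUnipotent R f := by
  obtain ⟨i, j, hij, r, hlt, rfl⟩ := hg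
  have mem {u v : Fin n} (huv : u ≠ v) (hf : f u < f v) (t : R) :
      elemMat u v huv t ∈ blockUnipotent R f :=
    subset_closure (elemMat_mem_elemMats huv hf t)
  by_cases hbi : b = i
  · subst hbi
    have hfaj : f a < f j := hf.trans_lt hlt
    rw [elemMat_conj_chain hab hij (ne_of_apply_ne f hfaj.ne)]
    exact mul_mem (mem hij hlt r) (mem _ hfaj _)
  by_cases haj : a = j
  · subst haj
    have hfib : f i < f b := hlt.trans_le hf
    rw [elemMat_conj_chain' hij hab (ne_of_apply_ne f hfib.ne)]
    exact mul_mem (mem hij hlt r) (mem _ hfib _)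
  rw [elemMat_conj_of_ne hab hij hbi haj]
  exact mem hij hlt r

theorem blockParabolic_le_normalizer :
    blockParabolic R f ≤ normalizer (blockUnipotent R f : Set (SpecialLinearGroup (Fin n) R)) := by
  refine closure_le_normalizer_closure_of_forall_inv_mem ?_ ?_
  · rintro g (hg | hg)
    exacts [Or.inl (inv_mem_diagMats hg), Or.inr (inv_mem_elemMats hg)]
  · rintro g (hd | ⟨a, b, hab, s, hf, rfl⟩) _ ⟨i, j, hij, r, hlt, rfl⟩
    · rw [diagMats_conj_elemMat hd]
      exact subset_closure (elemMat_mem_elemMats hij hlt _)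
    · exact elemMat_conj_mem_blockUnipotent f hab hf s (elemMat_mem_elemMats hij hlt r)

end BlockStructure

section Parabolic

variable {n : ℕ} {R : Type*} [CommRing R]

open Classical in
/-- The number of `k ≤ i` outside `E`; it is constant exactly along the `E`-blocks. -/
noncomputable def blockIndex (E : Set ℕ) (i : Fin n) : ℕ :=
  Nat.count (· ∉ E) (i + 1)

open Classical in
theorem blockIndex_mono (E : Set ℕ) : Monotone (blockIndex (n := n) E) :=
  fun _ _ h => Nat.count_monotone _ (Nat.succ_le_succ h)

open Classical in
theorem iConn_iff_blockIndex_le {E : Set ℕ} {i j : Fin n} :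
    IConn E i j ↔ blockIndex E j ≤ blockIndex E i := by
  rw [← not_lt]
  constructor
  · intro hc hlt
    obtain ⟨m, hm, hmE⟩ := Nat.exists_of_count_lt_count hlt
    exact hmE (hc m hm.1 (Nat.lt_succ_iff.1 hm.2))
  · intro h k hik hkj
    by_contra hk
    exact h ((Nat.count_monotone _ hik).trans_lt (Nat.count_strict_mono hk (Nat.lt_succ_of_le hkj)))

theorem blockIndex_eq_of_iConn {E : Set ℕ} {i j : Fin n} (hij : i ≤ j) (h : IConn E i j) :
    blockIndex E i = blockIndex E j :=
  le_antisymm (blockIndex_mono E hij) (iConn_iff_blockIndex_le.1 h)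

theorem mem_iff_add_one_mem_of_mem_union_nonAdjSet {I : Set ℕ} {k : ℕ}
    (hk : k ∈ I ∪ nonAdjSet n I) (hk1 : k + 1 ∈ I ∪ nonAdjSet n I) : k ∈ I ↔ k + 1 ∈ I := by
  simp only [nonAdjSet, adjSet, Set.mem_union, Set.mem_sdiff, Set.mem_ofPred_eq,
    add_tsub_cancel_right] at hk hk1
  tauto

theorem IConn.or_of_union_nonAdjSet {I : Set ℕ} {i j : Fin n}
    (h : IConn (I ∪ nonAdjSet n I) i j) : IConn I i j ∨ IConn (nonAdjSet n I) i j := by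
  have hconst : ∀ k, i.val + 1 ≤ k → k ≤ j → (k ∈ I ↔ i.val + 1 ∈ I) := by
    intro k hk
    induction k, hk using Nat.le_induction with
    | base => exact fun _ => Iff.rfl
    | succ k hk ih =>
      exact fun hkj => (mem_iff_add_one_mem_of_mem_union_nonAdjSet (h k hk (by omega))
        (h (k + 1) (by omega) hkj)).symm.trans (ih (by omega))
  by_cases hi : i.val + 1 ∈ I
  · exact Or.inl fun k h1 h2 => (hconst k h1 h2).2 hi
  · exact Or.inr fun k h1 h2 => (h k h1 h2).resolve_left fun hk => hi ((hconst k h1 h2).1 hk)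

variable (I : Set ℕ)

theorem kerK_eq_blockUnipotent :
    kerK n R I = blockUnipotent R (blockIndex (I ∪ nonAdjSet n I)) := by
  refine congrArg Subgroup.closure (Set.ext fun g => ⟨?_, ?_⟩)
  · rintro ⟨i, j, hij, r, hnc, rfl⟩
    have hlt : blockIndex (I ∪ nonAdjSet n I) i < blockIndex _ j :=
      lt_of_not_ge fun h => hnc (iConn_iff_blockIndex_le.2 h)
    exact elemMat_mem_elemMats _ hlt r
  · rintro ⟨i, j, -, r, hlt, rfl⟩
    exact ⟨i, j, (blockIndex_mono _).reflect_lt hlt, r,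
      fun hc => not_lt.2 (iConn_iff_blockIndex_le.1 hc) hlt, rfl⟩

theorem parabolic_le_blockParabolic :
    parabolic n R I ≤ blockParabolic R (blockIndex (I ∪ nonAdjSet n I)) := by
  refine closure_mono ?_
  rintro g ((hd | ⟨i, j, hij, r, rfl⟩) | ⟨i, j, hij, r, hc, rfl⟩)
  · exact Or.inl hd
  · exact Or.inr (elemMat_mem_elemMats _ (blockIndex_mono _ hij.le) r)
  · exact Or.inr (elemMat_mem_elemMats _
      (iConn_iff_blockIndex_le.1 fun k h1 h2 => Or.inl (hc k h1 h2)) r)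

theorem extLevi_le_blockLevi :
    extLevi n R I ≤ blockLevi R (blockIndex (I ∪ nonAdjSet n I)) := by
  refine closure_mono ?_
  rintro g (((hd | ⟨i, j, hij, r, hc, rfl⟩) | ⟨i, j, hij, r, hc, rfl⟩) | ⟨i, j, hij, r, hc, rfl⟩)
  · exact Or.inl hd
  · exact Or.inr (elemMat_mem_elemMats _
      (blockIndex_eq_of_iConn hij.le fun k h1 h2 => Or.inl (hc k h1 h2)) r)
  · exact Or.inr (elemMat_mem_elemMats _
      (blockIndex_eq_of_iConn hij.le fun k h1 h2 => Or.inl (hc k h1 h2)).symm r)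
  · exact Or.inr (elemMat_mem_elemMats _
      (blockIndex_eq_of_iConn hij.le fun k h1 h2 => Or.inr (hc k h1 h2)) r)

theorem kerK_le_parabolic : kerK n R I ≤ parabolic n R I := by
  refine closure_mono ?_
  rintro _ ⟨i, j, hij, r, -, rfl⟩
  exact Or.inl (Or.inr ⟨i, j, hij, r, rfl⟩)

theorem extLevi_le_parabolic : extLevi n R I ≤ parabolic n R I := by
  refine closure_mono ?_
  rintro g (((hd | ⟨i, j, hij, r, -, rfl⟩) | hl) | ⟨i, j, hij, r, -, rfl⟩)
  · exact Or.inl (Or.inl hd)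
  · exact Or.inl (Or.inr ⟨i, j, hij, r, rfl⟩)
  · exact Or.inr hl
  · exact Or.inl (Or.inr ⟨i, j, hij, r, rfl⟩)

theorem parabolic_le_kerK_sup_extLevi : parabolic n R I ≤ kerK n R I ⊔ extLevi n R I := by
  refine closure_le _ |>.2 ?_
  rintro g ((hd | ⟨i, j, hij, r, rfl⟩) | hl)
  · exact mem_sup_right (subset_closure (Or.inl (Or.inl (Or.inl hd))))
  · by_cases hc : IConn (I ∪ nonAdjSet n I) i j
    · rcases hc.or_of_union_nonAdjSet with hI | hN
      · exact mem_sup_right (subset_closure (Or.inl (Or.inl (Or.inr ⟨i, j, hij, r, hI, rfl⟩))))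
      · exact mem_sup_right (subset_closure (Or.inr ⟨i, j, hij, r, hN, rfl⟩))
    · exact mem_sup_left (subset_closure ⟨i, j, hij, r, hc, rfl⟩)
  · exact mem_sup_right (subset_closure (Or.inl (Or.inr hl)))

end Parabolic

theorem kerK_normal_complement_general
    {R : Type*} [CommRing R] {n : ℕ}
    (I : Set ℕ) :
    kerK n R I ≤ parabolic n R I ∧
    (∀ p ∈ parabolic n R I, ∀ x ∈ kerK n R I, p * x * p⁻¹ ∈ kerK n R I) ∧
    kerK n R I ⊓ extLevi n R I = ⊥ ∧
    (kerK n R I : Set (Matrix.SpecialLinearGroup (Fin n) R)) *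
      (extLevi n R I : Set (Matrix.SpecialLinearGroup (Fin n) R)) =
      (parabolic n R I : Set (Matrix.SpecialLinearGroup (Fin n) R)) := by
  have hnorm : parabolic n R I ≤ normalizer (kerK n R I : Set (SpecialLinearGroup (Fin n) R)) := by
    rw [kerK_eq_blockUnipotent]
    exact (parabolic_le_blockParabolic I).trans (blockParabolic_le_normalizer _)
  refine ⟨kerK_le_parabolic I, fun p hp x hx => (mem_normalizer_iff.1 (hnorm hp) x).1 hx, ?_, ?_⟩
  · rw [eq_bot_iff, ← blockUnipotent_inf_blockLevi (R := R) (blockIndex (I ∪ nonAdjSet n I)),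
      kerK_eq_blockUnipotent]
    exact inf_le_inf_left _ (extLevi_le_blockLevi I)
  · rw [← coe_mul_of_right_le_normalizer_left _ _ ((extLevi_le_parabolic I).trans hnorm),
      le_antisymm (sup_le (kerK_le_parabolic I) (extLevi_le_parabolic I))
        (parabolic_le_kerK_sup_extLevi I)]

/-- For ∅ ≠ I ⊆ {1,…,n−1}: K_I(R) is a normal subgroup of P_I(R), it intersects the
extended Levi factor LE_I(R) trivially, and K_I(R)·LE_I(R) = P_I(R); in particular
LE_I(R) is a retract of P_I(R) with kernel K_I(R). -/
theorem kerK_normal_complement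
    {R : Type*} [CommRing R] {n : ℕ} (hn : 2 ≤ n)
    (I : Set ℕ) (hI : I ⊆ Set.Icc 1 (n - 1)) (hne : I.Nonempty) :
    kerK n R I ≤ parabolic n R I ∧
    (∀ p ∈ parabolic n R I, ∀ x ∈ kerK n R I, p * x * p⁻¹ ∈ kerK n R I) ∧
    kerK n R I ⊓ extLevi n R I = ⊥ ∧
    (kerK n R I : Set (Matrix.SpecialLinearGroup (Fin n) R)) *
      (extLevi n R I : Set (Matrix.SpecialLinearGroup (Fin n) R)) =
      (parabolic n R I : Set (Matrix.SpecialLinearGroup (Fin n) R)) :=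
  kerK_normal_complement_general I
end

section
/- Let R be a commutative ring with 1, n ≥ 2, and let (i,j) and (k,l) be pairs of indices in {1,…,n} with i ≠ j, k ≠ l, (k,l) ≠ (i,j), and (k,l) ≠ (j,i). Then there exists a function d : {1,…,n} → ℤ with ∑_m d_m = 0, d_i = d_j, and d_k ≠ d_l; consequently, for every unit u ∈ Rˣ the diagonal matrix h(u) = diag(u^{d_1},…,u^{d_n}) lies in SL_n(R), commutes with e_{ij}(r) for every r ∈ R, and satisfies h(u)·e_{kl}(s)·h(u)⁻¹ = e_{kl}(u^{d_k − d_l}·s) for every s ∈ R, where d_k − d_l ≠ 0. -/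
lemma prod_zpow_eq_zpow_sum {G : Type*} [CommGroup G] {ι : Type*} (s : Finset ι)
    (f : ι → ℤ) (a : G) : ∏ m ∈ s, a ^ f m = a ^ ∑ m ∈ s, f m :=
  Finset.cons_induction (by simp)
    (fun _ _ _ ih ↦ by simp [Finset.prod_cons, Finset.sum_cons, zpow_add, ih]) s

lemma diag_mul_transvection {R : Type*} [CommRing R] {n : ℕ} (k l : Fin n) (hkl : k ≠ l)
    (v : Fin n → R) (s t : R) (hvs : v k * s = t * v l) :
    Matrix.diagonal v * Matrix.transvection k l s =
      Matrix.transvection k l t * Matrix.diagonal v := by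
  ext a b
  rw [Matrix.diagonal_mul, Matrix.mul_diagonal]
  simp only [Matrix.transvection, Matrix.add_apply, Matrix.one_apply,
    Matrix.single, Matrix.of_apply]
  by_cases h : k = a ∧ l = b
  · obtain ⟨rfl, rfl⟩ := h
    simp [hkl, hvs]
  · by_cases hab : a = b
    · subst hab; simp [h, mul_comm]
    · simp [h, hab]

/-- Given pairs (i,j), (k,l) with i ≠ j, k ≠ l, (k,l) ≠ (i,j), (k,l) ≠ (j,i), there is
d : {1,…,n} → ℤ with ∑ d = 0, dᵢ = dⱼ and d_k ≠ d_l; for every unit u the diagonal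
matrix h(u) = diag(u^{d₁},…,u^{dₙ}) lies in SL_n(R), commutes with e_{ij}(r), and
h(u)·e_{kl}(s)·h(u)⁻¹ = e_{kl}(u^{d_k − d_l}·s), where d_k − d_l ≠ 0. -/
theorem exists_torus_weight
    {R : Type*} [CommRing R] {n : ℕ} (hn : 2 ≤ n)
    (i j k l : Fin n) (hij : i ≠ j) (hkl : k ≠ l)
    (h1 : ¬(k = i ∧ l = j)) (h2 : ¬(k = j ∧ l = i)) :
    ∃ d : Fin n → ℤ, (∑ m, d m) = 0 ∧ d i = d j ∧ d k ≠ d l ∧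
      ∀ u : Rˣ, ∃ h : Matrix.SpecialLinearGroup (Fin n) R,
        (h : Matrix (Fin n) (Fin n) R) =
          Matrix.diagonal (fun m => ((u ^ d m : Rˣ) : R)) ∧
        (∀ r : R, h * elemMat i j hij r = elemMat i j hij r * h) ∧
        (∀ s : R, h * elemMat k l hkl s * h⁻¹ =
          elemMat k l hkl (((u ^ (d k - d l) : Rˣ) : R) * s)) := by
  classical
  obtain ⟨p, hpkl, hpi, hpj⟩ : ∃ p : Fin n, (p = k ∨ p = l) ∧ p ≠ i ∧ p ≠ j := by
    by_cases hki : k = i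
    · subst hki
      exact ⟨l, Or.inr rfl, fun h => hkl h.symm, fun h => h1 ⟨rfl, h⟩⟩
    · by_cases hkj : k = j
      · subst hkj
        exact ⟨l, Or.inr rfl, fun h => h2 ⟨rfl, h⟩, fun h => hkl h.symm⟩
      · exact ⟨k, Or.inl rfl, hki, hkj⟩
  set d : Fin n → ℤ := fun m => if m = p then (n : ℤ) - 1 else -1 with hd
  have hdeq : ∀ m, d m = (if m = p then (n : ℤ) else 0) - 1 := by
    intro m; simp only [hd]; split <;> ring
  have hsum : (∑ m, d m) = 0 := by
    simp [hdeq, Finset.sum_sub_distrib, Finset.sum_ite_eq']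
  have hne1 : (n : ℤ) - 1 ≠ -1 := by omega
  have hdij : d i = d j := by
    simp only [hd]
    rw [if_neg (fun h : i = p => hpi h.symm), if_neg (fun h : j = p => hpj h.symm)]
  have hdkl : d k ≠ d l := by
    rcases hpkl with h | h <;> subst h <;>
      simp [hd, hkl, hkl.symm, hne1, Ne.symm hne1]
  refine ⟨d, hsum, hdij, hdkl, fun u => ?_⟩
  set v : Fin n → R := fun m => ((u ^ d m : Rˣ) : R) with hv
  have hdet : (Matrix.diagonal v).det = 1 := by
    rw [Matrix.det_diagonal]
    have : (∏ m, u ^ d m : Rˣ) = 1 := by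
      rw [prod_zpow_eq_zpow_sum, hsum, zpow_zero]
    calc ∏ m, v m = ((∏ m, u ^ d m : Rˣ) : R) := by push_cast [hv]; rfl
      _ = 1 := by rw [this]; rfl
  set H : Matrix.SpecialLinearGroup (Fin n) R := ⟨Matrix.diagonal v, hdet⟩ with hH
  refine ⟨H, rfl, ?_, ?_⟩
  · intro r
    apply Subtype.ext
    show Matrix.diagonal v * Matrix.transvection i j r =
      Matrix.transvection i j r * Matrix.diagonal v
    exact diag_mul_transvection i j hij v r r (by simp only [hv]; rw [hdij, mul_comm])
  · intro s
    have key : H * elemMat k l hkl s =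
        elemMat k l hkl (((u ^ (d k - d l) : Rˣ) : R) * s) * H := by
      apply Subtype.ext
      show Matrix.diagonal v * Matrix.transvection k l s =
        Matrix.transvection k l _ * Matrix.diagonal v
      refine diag_mul_transvection k l hkl v s _ ?_
      have huk : (u ^ d k : Rˣ) = u ^ (d k - d l) * u ^ d l := by
        rw [← zpow_add]; ring_nf
      calc v k * s = ((u ^ d k : Rˣ) : R) * s := rfl
        _ = ((u ^ (d k - d l) : Rˣ) : R) * ((u ^ d l : Rˣ) : R) * s := by
            rw [huk]; push_cast; ring
        _ = ((u ^ (d k - d l) : Rˣ) : R) * s * v l := by simp only [hv]; ring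
    rw [key, mul_inv_cancel_right]
end

section
/- Let R be a commutative ring with 1, n ≥ 2, I ⊆ {1,…,n−1}, and let U_I(R) be the subgroup of SL_n(R) generated by all e_{ij}(r) with i < j not I-connected and r ∈ R (the unipotent radical of P_I(R)). If the standard parabolic subgroup P_I(R) is finitely presented, then U_I(R) is the normal closure in P_I(R) of a finite subset. -/
/-- The unipotent radical U_I(R) of P_I(R): generated by all `e_{ij}(r)` with `i < j`
not an `I`-connected pair. -/
def unipotentRadical (n : ℕ) (R : Type*) [CommRing R] (I : Set ℕ) :
    Subgroup (Matrix.SpecialLinearGroup (Fin n) R) :=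
  Subgroup.closure
    {g | ∃ (i j : Fin n) (h : i < j) (r : R), ¬ IConn I i j ∧ g = elemMat i j (ne_of_lt h) r}

theorem IsFinitelyPresented.fg {G : Type*} [Group G] (h : IsFinitelyPresented G) :
    Group.FG G := by
  obtain ⟨m, S, ⟨e⟩⟩ := h
  exact Group.fg_of_surjective (f := e.toMonoidHom.comp (QuotientGroup.mk' _))
    (e.surjective.comp (QuotientGroup.mk'_surjective _))

theorem MonoidHom.normalClosure_image_inv_mul_eq_ker {G : Type*} [Group G] {s : Set G}
    (hs : Subgroup.closure s = ⊤) (ρ : G →* G) (hρ : ∀ g, ρ (ρ g) = ρ g) :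
    Subgroup.normalClosure ((fun g => g⁻¹ * ρ g) '' s) = ρ.ker := by
  set N := Subgroup.normalClosure ((fun g => g⁻¹ * ρ g) '' s)
  refine le_antisymm (Subgroup.normalClosure_le_normal ?_) fun g hg => ?_
  · rintro _ ⟨g, -, rfl⟩
    simp [MonoidHom.mem_ker, hρ]
  · have hπ : (QuotientGroup.mk' N).comp ρ = QuotientGroup.mk' N := by
      refine MonoidHom.eq_of_eqOn_dense hs fun t ht => ?_
      rw [MonoidHom.comp_apply, QuotientGroup.mk'_apply, QuotientGroup.mk'_apply, eq_comm,
        QuotientGroup.eq]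
      exact Subgroup.subset_normalClosure ⟨t, ht, rfl⟩
    rw [← QuotientGroup.eq_one_iff, ← QuotientGroup.mk'_apply, ← hπ, MonoidHom.comp_apply,
      MonoidHom.mem_ker.mp hg, map_one]

theorem MonoidHom.exists_finset_normalClosure_eq_ker {G : Type*} [Group G] [Group.FG G]
    (ρ : G →* G) (hρ : ∀ g, ρ (ρ g) = ρ g) :
    ∃ S : Finset G, Subgroup.normalClosure (S : Set G) = ρ.ker := by
  classical
  obtain ⟨-, T, -, hT⟩ := Group.fg_iff'.mp ‹_›
  refine ⟨T.image fun g => g⁻¹ * ρ g, ?_⟩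
  rw [Finset.coe_image, ρ.normalClosure_image_inv_mul_eq_ker hT hρ]

open Classical in
/-- `blockIdx I i` counts the simple roots `k ≤ i` outside `I` (with the 1-based root indexing of
`IConn`); its fibres are the diagonal blocks of the Levi factor `L_I`, so `P_I` consists of block
upper triangular matrices for it. -/
noncomputable def blockIdx {n : ℕ} (I : Set ℕ) (i : Fin n) : ℕ :=
  Nat.count (fun k => k + 1 ∉ I) i

section blockIdx
variable {n : ℕ} (I : Set ℕ)

theorem blockIdx_mono : Monotone (blockIdx (n := n) I) :=
  fun _ _ hij => by classical exact Nat.count_monotone _ hij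

variable {I}

theorem blockIdx_eq_of_iConn {i j : Fin n} (hij : i ≤ j) (h : IConn I i j) :
    blockIdx I i = blockIdx I j := by
  classical
  suffices ∀ k, (i : ℕ) ≤ k → k ≤ j →
      Nat.count (fun k => k + 1 ∉ I) k = blockIdx I i from
    (this j hij le_rfl).symm
  intro k hik hkj
  induction k, hik using Nat.le_induction with
  | base => rfl
  | succ k hik ih =>
    rw [Nat.count_succ, if_neg (not_not.mpr (h (k + 1) (by omega) hkj)), ih (by omega), add_zero]

theorem blockIdx_lt_of_not_iConn {i j : Fin n} (h : ¬ IConn I i j) :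
    blockIdx I i < blockIdx I j := by
  classical
  obtain ⟨k, hik, hkj, hk⟩ : ∃ k, (i : ℕ) + 1 ≤ k ∧ k ≤ j ∧ k ∉ I := by
    simpa [IConn] using h
  obtain ⟨k, rfl⟩ : ∃ k', k = k' + 1 := ⟨k - 1, by omega⟩
  exact (Nat.count_monotone _ (by omega : (i : ℕ) ≤ k)).trans_lt
    (Nat.count_strict_mono hk (by omega))

end blockIdx

namespace Matrix

variable {m α R : Type*}

def IsBlockUnitriangular [DecidableEq m] [Zero R] [One R] [LE α]
    (M : Matrix m m R) (b : m → α) : Prop :=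
  ∀ i j, b j ≤ b i → M i j = (1 : Matrix m m R) i j

open Classical in
noncomputable def offDiagSupport [Fintype m] [Zero R] (M : Matrix m m R) : Finset (m × m) :=
  {p | p.1 ≠ p.2 ∧ M p.1 p.2 ≠ 0}

theorem mem_offDiagSupport [Fintype m] [Zero R] {M : Matrix m m R} {i j : m} :
    (i, j) ∈ offDiagSupport M ↔ i ≠ j ∧ M i j ≠ 0 := by
  simp [offDiagSupport]

theorem eq_one_of_offDiagSupport_eq_empty [DecidableEq m] [Fintype m] [Zero R] [One R] [Preorder α]
    {M : Matrix m m R} {b : m → α} (hM : M.IsBlockUnitriangular b)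
    (h : offDiagSupport M = ∅) : M = 1 := by
  ext i j
  rcases eq_or_ne i j with rfl | hij
  · exact hM i i le_rfl
  · by_contra hne
    rw [one_apply_ne hij] at hne
    exact Finset.notMem_empty (i, j) (h ▸ mem_offDiagSupport.mpr ⟨hij, hne⟩)

theorem mul_transvection_eq_add_single [Fintype m] [DecidableEq m] [CommRing R]
    {M : Matrix m m R} {i : m} (hM : ∀ a, M a i = (1 : Matrix m m R) a i) (j : m) (c : R) :
    M * transvection i j c = M + single i j c := by
  ext a a'
  rcases eq_or_ne a' j with rfl | ha'
  · rw [mul_transvection_apply_same, hM, add_apply, single_apply]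
    rcases eq_or_ne a i with rfl | ha
    · simp
    · simp [ha, ha.symm]
  · rw [mul_transvection_apply_of_ne _ _ _ _ ha', add_apply, single_apply, if_neg (by tauto),
      add_zero]

variable [DecidableEq α] (b : m → α)

def blockDiagPart [Zero R] (M : Matrix m m R) : Matrix m m R :=
  of fun i j => if b i = b j then M i j else 0

variable {b}

@[simp]
theorem blockDiagPart_apply [Zero R] (M : Matrix m m R) (i j : m) :
    blockDiagPart b M i j = if b i = b j then M i j else 0 :=
  rfl

theorem blockDiagPart_eq_self [Zero R] {M : Matrix m m R} (h : ∀ i j, b i ≠ b j → M i j = 0) :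
    blockDiagPart b M = M := by
  ext i j
  by_cases hij : b i = b j <;> simp [hij, h i j]

theorem blockDiagPart_blockDiagPart [Zero R] (M : Matrix m m R) :
    blockDiagPart b (blockDiagPart b M) = blockDiagPart b M :=
  blockDiagPart_eq_self fun _ _ hij => by simp [hij]

theorem blockDiagPart_one [DecidableEq m] [Zero R] [One R] :
    blockDiagPart b (1 : Matrix m m R) = 1 :=
  blockDiagPart_eq_self fun _ _ hij => one_apply_ne fun h => hij (congrArg b h)

theorem blockDiagPart_transvection [DecidableEq m] [Fintype m] [CommRing R] (i j : m) (c : R) :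
    blockDiagPart b (transvection i j c) = if b i = b j then transvection i j c else 1 := by
  split_ifs with hij
  · refine blockDiagPart_eq_self fun a a' ha => ?_
    have : ¬(i = a ∧ j = a') := by rintro ⟨rfl, rfl⟩; exact ha hij
    simp [transvection, one_apply_ne (fun h => ha (congrArg b h)), this]
  · ext a a'
    by_cases ha : b a = b a'
    · have : ¬(i = a ∧ j = a') := by rintro ⟨rfl, rfl⟩; exact hij ha
      simp [transvection, ha, this]
    · simp [ha, one_apply_ne (fun h => ha (congrArg b h))]

variable [LinearOrder α]

theorem blockTriangular_blockDiagPart [Zero R] (M : Matrix m m R) :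
    (blockDiagPart b M).BlockTriangular b :=
  fun _ _ hij => if_neg hij.ne'

theorem BlockTriangular.blockDiagPart_mul [Fintype m] [NonUnitalNonAssocSemiring R]
    {M N : Matrix m m R} (hM : M.BlockTriangular b) (hN : N.BlockTriangular b) :
    blockDiagPart b (M * N) = blockDiagPart b M * blockDiagPart b N := by
  ext i j
  simp only [blockDiagPart_apply, mul_apply]
  split_ifs with hij
  · refine Finset.sum_congr rfl fun k _ => ?_
    rcases lt_trichotomy (b k) (b i) with hk | hk | hk
    · simp [hM hk]
    · simp [hk, hij]
    · simp [hN (hij ▸ hk)]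
  · refine (Finset.sum_eq_zero fun k _ => ?_).symm
    by_cases hk : b i = b k
    · simp [hk, (hk ▸ hij : b k ≠ b j)]
    · simp [hk]

theorem BlockTriangular.det_blockDiagPart [DecidableEq m] [Fintype m] [CommRing R]
    {M : Matrix m m R} (hM : M.BlockTriangular b) : (blockDiagPart b M).det = M.det := by
  rw [(blockTriangular_blockDiagPart M).det, hM.det]
  refine Finset.prod_congr rfl fun a _ => congrArg det ?_
  ext i j
  simp [toSquareBlock_def, i.2, j.2]

theorem BlockTriangular.isBlockUnitriangular [DecidableEq m] [Zero R] [One R]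
    {M : Matrix m m R} (hM : M.BlockTriangular b) (hD : blockDiagPart b M = 1) :
    M.IsBlockUnitriangular b := by
  intro i j hij
  rcases hij.lt_or_eq with hlt | heq
  · rw [hM hlt, one_apply_ne fun h => hlt.ne (congrArg b h.symm)]
  · simpa [heq] using congrFun (congrFun hD i) j

end Matrix

namespace Matrix.SpecialLinearGroup

variable {m α R : Type*} [DecidableEq m] [Fintype m] [CommRing R] [LinearOrder α] {b : m → α}

theorem exists_transvection_offDiagSupport_ssubset {A : SpecialLinearGroup m R}
    (hA : (A : Matrix m m R).IsBlockUnitriangular b)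
    (hne : (offDiagSupport (A : Matrix m m R)).Nonempty) :
    ∃ i j, ∃ hij : i ≠ j, ∃ c : R, b i < b j ∧
      ((A * (transvection hij c)⁻¹ : SpecialLinearGroup m R) : Matrix m m R).IsBlockUnitriangular
        b ∧
      offDiagSupport ((A * (transvection hij c)⁻¹ : SpecialLinearGroup m R) : Matrix m m R) ⊂
        offDiagSupport (A : Matrix m m R) := by
  obtain ⟨⟨i, j⟩, hp, hmin⟩ :=
    (offDiagSupport (A : Matrix m m R)).exists_min_image (b ·.1) hne
  rw [mem_offDiagSupport] at hp
  have hbij : b i < b j := lt_of_not_ge fun h => hp.2 ((hA i j h).trans (one_apply_ne hp.1))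
  -- column `i` of `A` is trivial, by minimality of `b i`
  have hcol : ∀ a, (A : Matrix m m R) a i = (1 : Matrix m m R) a i := by
    intro a
    by_cases hba : b i ≤ b a
    · exact hA a i hba
    · by_contra h
      have ha : a ≠ i := by rintro rfl; exact hba le_rfl
      exact hba (hmin (a, i) (mem_offDiagSupport.mpr ⟨ha, by rwa [one_apply_ne ha] at h⟩))
  set c := (A : Matrix m m R) i j
  set A' := A * (transvection hp.1 c)⁻¹
  have hA' : (A' : Matrix m m R) = A + single i j (-c) := by
    rw [coe_mul, transvection_inv]
    exact mul_transvection_eq_add_single hcol j (-c)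
  have hA'_apply : ∀ a a', (a, a') ≠ (i, j) → (A' : Matrix m m R) a a' = A a a' := by
    intro a a' h
    rw [hA', add_apply, single_apply, if_neg (by simpa [eq_comm, and_comm] using h), add_zero]
  have hA'ij : (A' : Matrix m m R) i j = 0 := by simp [hA', c]
  refine ⟨i, j, hp.1, c, hbij, fun a a' h => ?_, ?_⟩
  · rw [hA'_apply a a' (by rintro ⟨⟩; exact hbij.not_ge h)]
    exact hA a a' h
  · refine Finset.ssubset_iff_subset_ne.mpr ⟨fun ⟨a, a'⟩ hq => ?_, fun h => ?_⟩
    · rw [mem_offDiagSupport] at hq ⊢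
      have hne : (a, a') ≠ (i, j) := by rintro ⟨⟩; exact hq.2 hA'ij
      exact ⟨hq.1, hA'_apply a a' hne ▸ hq.2⟩
    · have hmem := h ▸ mem_offDiagSupport.mpr hp
      exact (mem_offDiagSupport.mp hmem).2 hA'ij

theorem mem_of_isBlockUnitriangular {H : Subgroup (SpecialLinearGroup m R)}
    (hH : ∀ i j (hij : i ≠ j) (c : R), b i < b j → transvection hij c ∈ H)
    {A : SpecialLinearGroup m R} (hA : (A : Matrix m m R).IsBlockUnitriangular b) : A ∈ H := by
  induction hs : offDiagSupport (A : Matrix m m R) using Finset.strongInduction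
    generalizing A with
  | H s ih =>
  subst hs
  rcases (offDiagSupport (A : Matrix m m R)).eq_empty_or_nonempty with hempty | hne
  · convert H.one_mem
    exact Subtype.ext (eq_one_of_offDiagSupport_eq_empty hA hempty)
  · obtain ⟨i, j, hij, c, hbij, hA', hlt⟩ := exists_transvection_offDiagSupport_ssubset hA hne
    simpa using H.mul_mem (ih _ hlt hA' rfl) (hH i j hij c hbij)

variable [DecidableEq α] (b)

variable (R) in
def blockTriangular : Subgroup (SpecialLinearGroup m R) where
  carrier := {A | (A : Matrix m m R).BlockTriangular b}
  one_mem' := blockTriangular_one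
  mul_mem' := BlockTriangular.mul
  inv_mem' {A} hA := by
    have : Invertible (A : Matrix m m R) := (A : Matrix m m R).invertibleOfIsUnitDet (by simp)
    simpa [inv_def] using blockTriangular_inv_of_blockTriangular hA

variable (R) in
def blockDiagPartHom : blockTriangular R b →* blockTriangular R b where
  toFun A := ⟨⟨blockDiagPart b A, (BlockTriangular.det_blockDiagPart A.2).trans A.1.2⟩,
    blockTriangular_blockDiagPart _⟩
  map_one' := Subtype.ext (Subtype.ext blockDiagPart_one)
  map_mul' A B := Subtype.ext (Subtype.ext (BlockTriangular.blockDiagPart_mul A.2 B.2))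

variable {b}

theorem blockDiagPartHom_eq_one_iff {A : blockTriangular R b} :
    blockDiagPartHom R b A = 1 ↔ blockDiagPart b (A : Matrix m m R) = 1 := by
  rw [Subtype.ext_iff, OneMemClass.coe_one, SpecialLinearGroup.ext_iff]
  exact Matrix.ext_iff

theorem blockDiagPartHom_mem_of_mem_closure {s : Set (SpecialLinearGroup m R)}
    {H : Subgroup (SpecialLinearGroup m R)} (hs : s ⊆ blockTriangular R b)
    (hgen : ∀ g (hg : g ∈ s),
      (blockDiagPartHom R b ⟨g, hs hg⟩ : SpecialLinearGroup m R) ∈ H)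
    {A : blockTriangular R b} (hA : (A : SpecialLinearGroup m R) ∈ Subgroup.closure s) :
    (blockDiagPartHom R b A : SpecialLinearGroup m R) ∈ H := by
  have hle : Subgroup.closure s ≤
      (H.comap ((blockTriangular R b).subtype.comp (blockDiagPartHom R b))).map
        (blockTriangular R b).subtype :=
    Subgroup.closure_le _ |>.mpr fun g hg => ⟨⟨g, hs hg⟩, hgen g hg, rfl⟩
  obtain ⟨A', hA', hA'A⟩ := hle hA
  rwa [← Subtype.ext hA'A]

end Matrix.SpecialLinearGroup

section Parabolic

open Matrix Matrix.SpecialLinearGroup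

variable {n : ℕ} {R : Type*} [CommRing R] (I : Set ℕ)

theorem blockTriangular_and_blockDiagPart_eq_self_or_one_of_mem {g : SpecialLinearGroup (Fin n) R}
    (hg : g ∈ diagMats n R ∪ allUpperElems n R ∪ lowerElems n R I) :
    (g : Matrix (Fin n) (Fin n) R).BlockTriangular (blockIdx I) ∧
      (blockDiagPart (blockIdx I) (g : Matrix (Fin n) (Fin n) R) = g ∨
        blockDiagPart (blockIdx I) (g : Matrix (Fin n) (Fin n) R) = 1) := by
  rcases hg with (hdiag | ⟨i, j, hij, r, rfl⟩) | ⟨i, j, hij, r, hconn, rfl⟩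
  · have hoff : ∀ i j, blockIdx I i ≠ blockIdx I j →
        (g : Matrix (Fin n) (Fin n) R) i j = 0 :=
      fun i j h => hdiag fun hij => h (congrArg _ hij)
    exact ⟨fun i j h => hoff i j h.ne', .inl (blockDiagPart_eq_self hoff)⟩
  · refine ⟨blockTriangular_transvection (blockIdx_mono I hij.le) r, ?_⟩
    simp only [elemMat, blockDiagPart_transvection]
    split_ifs <;> simp
  · have heq := blockIdx_eq_of_iConn hij.le hconn
    refine ⟨blockTriangular_transvection heq.ge r, .inl ?_⟩
    simp [elemMat, blockDiagPart_transvection, heq]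

theorem parabolic_le_blockTriangular :
    parabolic n R I ≤ blockTriangular R (blockIdx I) :=
  Subgroup.closure_le _ |>.mpr fun _ hg =>
    (blockTriangular_and_blockDiagPart_eq_self_or_one_of_mem I hg).1

theorem blockDiagPartHom_mem_parabolic {A : blockTriangular R (blockIdx (n := n) I)}
    (hA : (A : SpecialLinearGroup (Fin n) R) ∈ parabolic n R I) :
    (blockDiagPartHom R (blockIdx I) A : SpecialLinearGroup (Fin n) R) ∈ parabolic n R I := by
  refine blockDiagPartHom_mem_of_mem_closure
    (fun _ hg => (blockTriangular_and_blockDiagPart_eq_self_or_one_of_mem I hg).1)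
    (fun g hg => ?_) hA
  have hgP : g ∈ parabolic n R I := Subgroup.subset_closure hg
  rcases (blockTriangular_and_blockDiagPart_eq_self_or_one_of_mem I hg).2 with h | h
  · convert hgP using 1
    exact Subtype.ext h
  · convert one_mem (parabolic n R I) using 1
    exact Subtype.ext h

theorem unipotentRadical_le_parabolic : unipotentRadical n R I ≤ parabolic n R I :=
  Subgroup.closure_mono fun _ ⟨i, j, hij, r, _, hg⟩ =>
    .inl (.inr ⟨i, j, hij, r, hg⟩)

theorem blockDiagPartHom_eq_one_of_mem_unipotentRadical
    {A : blockTriangular R (blockIdx (n := n) I)}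
    (hA : (A : SpecialLinearGroup (Fin n) R) ∈ unipotentRadical n R I) :
    blockDiagPartHom R (blockIdx I) A = 1 := by
  have hs : {g | ∃ (i j : Fin n) (h : i < j) (r : R), ¬ IConn I i j ∧
      g = elemMat i j h.ne r} ⊆ blockTriangular R (blockIdx (n := n) I) := fun _ hg =>
    parabolic_le_blockTriangular I (unipotentRadical_le_parabolic I (Subgroup.subset_closure hg))
  refine OneMemClass.coe_eq_one.mp (Subgroup.mem_bot.mp
    (blockDiagPartHom_mem_of_mem_closure hs (fun g hg => ?_) hA))
  obtain ⟨i, j, hij, r, hconn, rfl⟩ := hg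
  refine Subgroup.mem_bot.mpr (OneMemClass.coe_eq_one.mpr (blockDiagPartHom_eq_one_iff.mpr ?_))
  simp [elemMat, blockDiagPart_transvection, (blockIdx_lt_of_not_iConn hconn).ne]

theorem mem_unipotentRadical_of_isBlockUnitriangular {g : SpecialLinearGroup (Fin n) R}
    (hg : (g : Matrix (Fin n) (Fin n) R).IsBlockUnitriangular (blockIdx I)) :
    g ∈ unipotentRadical n R I := by
  refine mem_of_isBlockUnitriangular (fun i j hij c hb => ?_) hg
  have hlt : i < j := (blockIdx_mono I).reflect_lt hb
  exact Subgroup.subset_closure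
    ⟨i, j, hlt, c, fun hc => hb.ne (blockIdx_eq_of_iConn hlt.le hc), rfl⟩

variable (n R) in
noncomputable def parabolicRetraction : parabolic n R I →* parabolic n R I :=
  ((blockTriangular R (blockIdx I)).subtype.comp ((blockDiagPartHom R (blockIdx I)).comp
    (Subgroup.inclusion (parabolic_le_blockTriangular I)))).codRestrict _
    fun A => blockDiagPartHom_mem_parabolic I A.2

theorem parabolicRetraction_parabolicRetraction (A : parabolic n R I) :
    parabolicRetraction n R I (parabolicRetraction n R I A) = parabolicRetraction n R I A :=
  Subtype.ext (Subtype.ext (blockDiagPart_blockDiagPart _))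

theorem ker_parabolicRetraction :
    (parabolicRetraction n R I).ker =
      (unipotentRadical n R I).comap (parabolic n R I).subtype := by
  ext A
  let A' := Subgroup.inclusion (parabolic_le_blockTriangular I) A
  have hker : A ∈ (parabolicRetraction n R I).ker ↔ blockDiagPartHom R (blockIdx I) A' = 1 := by
    rw [MonoidHom.mem_ker, ← OneMemClass.coe_eq_one,
      ← OneMemClass.coe_eq_one (x := blockDiagPartHom R (blockIdx I) A')]
    rfl
  rw [hker, Subgroup.mem_comap]
  refine ⟨fun h => ?_, blockDiagPartHom_eq_one_of_mem_unipotentRadical (A := A') I⟩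
  exact mem_unipotentRadical_of_isBlockUnitriangular I
    (BlockTriangular.isBlockUnitriangular A'.2 (blockDiagPartHom_eq_one_iff.mp h))

end Parabolic

theorem unipotentRadical_finitely_normally_generated_general
    {R : Type*} [CommRing R] {n : ℕ}
    (I : Set ℕ)
    (h : IsFinitelyPresented ↥(parabolic n R I)) :
    ∃ S : Finset ↥(parabolic n R I),
      (∀ x ∈ S, (x : Matrix.SpecialLinearGroup (Fin n) R) ∈ unipotentRadical n R I) ∧
      Subgroup.normalClosure (S : Set ↥(parabolic n R I)) =
        (unipotentRadical n R I).comap (parabolic n R I).subtype := by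
  have := h.fg
  obtain ⟨S, hS⟩ := (parabolicRetraction n R I).exists_finset_normalClosure_eq_ker
    (parabolicRetraction_parabolicRetraction I)
  rw [ker_parabolicRetraction] at hS
  exact ⟨S, fun x hx => Subgroup.mem_comap.mp (hS ▸ Subgroup.subset_normalClosure hx), hS⟩

/-- If the standard parabolic subgroup P_I(R) ≤ SL_n(R) is finitely presented, then its
unipotent radical U_I(R) is the normal closure in P_I(R) of a finite subset. -/
theorem unipotentRadical_finitely_normally_generated
    {R : Type*} [CommRing R] {n : ℕ} (hn : 2 ≤ n)
    (I : Set ℕ) (hI : I ⊆ Set.Icc 1 (n - 1))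
    (h : IsFinitelyPresented ↥(parabolic n R I)) :
    ∃ S : Finset ↥(parabolic n R I),
      (∀ x ∈ S, (x : Matrix.SpecialLinearGroup (Fin n) R) ∈ unipotentRadical n R I) ∧
      Subgroup.normalClosure (S : Set ↥(parabolic n R I)) =
        (unipotentRadical n R I).comap (parabolic n R I).subtype :=
  unipotentRadical_finitely_normally_generated_general I h
end
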